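/- Let T be a bounded linear operator on a complex Hilbert space and q ∈ [0,1]. For all unit vectors x, y with ⟨x, y⟩ = q, one has |⟨Tx, y⟩|² ≤ (2q² - 1)·|⟨Tx, x⟩|² + (1 - q² + q√(1-q²))·‖Tx‖². -/

import Mathlib

/-!
Write `y = q x + z` with `z ⟂ x`, so `‖z‖ = √(1 - q²)`, and split `u = T x` likewise as
`⟪x, u⟫ x + w` with `‖u‖² = |⟪u, x⟫|² + ‖w‖²` (Bessel). Then
`|⟪u, y⟫| ≤ q |⟪u, x⟫| + ‖z‖ ‖w‖` by Cauchy–Schwarz, and squaring with AM–GM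
`2 |⟪u, x⟫| ‖w‖ ≤ |⟪u, x⟫|² + ‖w‖²` on the cross term gives the bound.
-/

open scoped InnerProductSpace

section UnitVector

variable {𝕜 E : Type*} [RCLike 𝕜] [NormedAddCommGroup E] [InnerProductSpace 𝕜 E]
  {x : E}

theorem norm_inner_le_norm_sub_inner_smul_mul_norm {z : E} (hz : ⟪x, z⟫_𝕜 = 0) (u : E) :
    ‖⟪u, z⟫_𝕜‖ ≤ ‖u - ⟪x, u⟫_𝕜 • x‖ * ‖z‖ := by
  have h : ⟪u, z⟫_𝕜 = ⟪u - ⟪x, u⟫_𝕜 • x, z⟫_𝕜 := by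
    rw [inner_sub_left, inner_smul_left, hz, mul_zero, sub_zero]
  exact h ▸ norm_inner_le_norm _ _

variable (hx : ‖x‖ = 1)
include hx

theorem inner_sub_inner_smul_of_norm_eq_one (u : E) : ⟪x, u - ⟪x, u⟫_𝕜 • x⟫_𝕜 = 0 := by
  rw [inner_sub_right, inner_smul_right, inner_self_eq_norm_sq_to_K, hx]
  simp

theorem norm_sq_eq_norm_inner_sq_add_norm_sub_inner_smul_sq (u : E) :
    ‖u‖ ^ 2 = ‖⟪x, u⟫_𝕜‖ ^ 2 + ‖u - ⟪x, u⟫_𝕜 • x‖ ^ 2 := by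
  have horth : ⟪⟪x, u⟫_𝕜 • x, u - ⟪x, u⟫_𝕜 • x⟫_𝕜 = 0 := by
    rw [inner_smul_left, inner_sub_inner_smul_of_norm_eq_one hx, mul_zero]
  have h := norm_add_sq_eq_norm_sq_add_norm_sq_of_inner_eq_zero _ _ horth
  rw [add_sub_cancel, norm_smul, hx, mul_one] at h
  simpa only [sq] using h

theorem norm_inner_le_of_norm_eq_one (u y : E) :
    ‖⟪u, y⟫_𝕜‖ ≤
      ‖⟪x, y⟫_𝕜‖ * ‖⟪u, x⟫_𝕜‖ + ‖u - ⟪x, u⟫_𝕜 • x‖ * ‖y - ⟪x, y⟫_𝕜 • x‖ := by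
  have hy : ⟪u, y⟫_𝕜 = ⟪x, y⟫_𝕜 * ⟪u, x⟫_𝕜 + ⟪u, y - ⟪x, y⟫_𝕜 • x⟫_𝕜 := by
    rw [inner_sub_right, inner_smul_right]
    ring
  calc ‖⟪u, y⟫_𝕜‖ ≤ ‖⟪x, y⟫_𝕜 * ⟪u, x⟫_𝕜‖ + ‖⟪u, y - ⟪x, y⟫_𝕜 • x⟫_𝕜‖ :=
        hy ▸ norm_add_le _ _
    _ ≤ _ := by
        rw [norm_mul]
        gcongr
        exact norm_inner_le_norm_sub_inner_smul_mul_norm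
          (inner_sub_inner_smul_of_norm_eq_one hx y) u

end UnitVector

theorem sq_le_of_le_mul_add_mul {q s a d b : ℝ} (hq : 0 ≤ q) (hs : 0 ≤ s)
    (hqs : s ^ 2 = 1 - q ^ 2) (hb : 0 ≤ b) (hbound : b ≤ q * a + d * s) :
    b ^ 2 ≤ (2 * q ^ 2 - 1) * a ^ 2 + (1 - q ^ 2 + q * s) * (a ^ 2 + d ^ 2) := by
  have hsq : b ^ 2 ≤ (q * a + d * s) ^ 2 := pow_le_pow_left₀ hb hbound 2
  have hamgm : q * s * (2 * a * d) ≤ q * s * (a ^ 2 + d ^ 2) :=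
    mul_le_mul_of_nonneg_left (two_mul_le_add_sq a d) (mul_nonneg hq hs)
  nlinarith

theorem stmt_4_general {H : Type*} [NormedAddCommGroup H] [InnerProductSpace ℂ H]
    (T : H →L[ℂ] H) (q : ℝ) (hq0 : 0 ≤ q)
    (x y : H) (hx : ‖x‖ = 1) (hy : ‖y‖ = 1) (hxy : (inner ℂ x y : ℂ) = (q : ℂ)) :
    ‖(inner ℂ (T x) y : ℂ)‖ ^ 2 ≤
      (2 * q ^ 2 - 1) * ‖(inner ℂ (T x) x : ℂ)‖ ^ 2 +
        (1 - q ^ 2 + q * Real.sqrt (1 - q ^ 2)) * ‖T x‖ ^ 2 := by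
  have hq : ‖(inner ℂ x y : ℂ)‖ = q := by rw [hxy, Complex.norm_real, Real.norm_of_nonneg hq0]
  have hz : ‖y - ⟪x, y⟫_ℂ • x‖ ^ 2 = 1 - q ^ 2 := by
    have h := norm_sq_eq_norm_inner_sq_add_norm_sub_inner_smul_sq (𝕜 := ℂ) hx y
    rw [hy, hq] at h
    linarith
  have hsqrt : Real.sqrt (1 - q ^ 2) = ‖y - ⟪x, y⟫_ℂ • x‖ := by
    rw [← hz, Real.sqrt_sq (norm_nonneg _)]
  rw [hsqrt, norm_sq_eq_norm_inner_sq_add_norm_sub_inner_smul_sq (𝕜 := ℂ) hx (T x),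
    norm_inner_symm (𝕜 := ℂ) x (T x)]
  refine sq_le_of_le_mul_add_mul hq0 (norm_nonneg _) hz (norm_nonneg _) ?_
  simpa only [hq] using norm_inner_le_of_norm_eq_one (𝕜 := ℂ) hx (T x) y

theorem stmt_4 {H : Type*} [NormedAddCommGroup H] [InnerProductSpace ℂ H] [CompleteSpace H]
    (T : H →L[ℂ] H) (q : ℝ) (hq0 : 0 ≤ q) (hq1 : q ≤ 1)
    (x y : H) (hx : ‖x‖ = 1) (hy : ‖y‖ = 1) (hxy : (inner ℂ x y : ℂ) = (q : ℂ)) :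
    ‖(inner ℂ (T x) y : ℂ)‖ ^ 2 ≤
      (2 * q ^ 2 - 1) * ‖(inner ℂ (T x) x : ℂ)‖ ^ 2 +
        (1 - q ^ 2 + q * Real.sqrt (1 - q ^ 2)) * ‖T x‖ ^ 2 :=
  stmt_4_general T q hq0 x y hx hy hxy
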